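/- arXiv:1012.1786 — 2 statements merged into one kernel-verified Lean document; each statement's English description precedes it below -/
import Mathlib

section
/- The ring of smooth group endomorphisms of ℂ* (with pointwise multiplication as addition and composition as multiplication) is isomorphic to the ring 𝓡 of 2×2 real matrices of the form [[b,0],[c,v]] with b, c ∈ ℝ and v ∈ ℤ. -/
/-!
For a smooth endomorphism `f` of `ℂˣ`, the map `z ↦ f (exp z)` is a differentiable homomorphism
`(ℂ, +) → (ℂ, ·)`, hence equals `exp ∘ L_f` for the real-linear map `L_f` given by its derivative at
`0`. Since `exp` is onto `ℂˣ`, `f ↦ L_f` is injective and turns pointwise products into sums and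
composition into composition. As `exp (L_f (2πi)) = f 1 = 1`, `L_f i` lies in `ℤ i`, which says
exactly that the matrix of `L_f` in the basis `(1, i)` is `[[b, 0], [c, v]]` with `v ∈ ℤ`;
conversely every such `L` comes from `g ↦ exp ((L 1 - v) log |g|) g ^ v`.
-/

noncomputable section

open Complex Finset

/-- `g^μ` for `μ = (b + c·i, v) ∈ ℂ × ℤ`: `|g|^(b+ci) · (g/|g|)^v`. -/
noncomputable def cpw (b c : ℝ) (v : ℤ) (g : ℂ) : ℂ :=
  ((‖g‖ : ℂ) ^ ((b : ℂ) + (c : ℂ) * Complex.I)) * (g / (‖g‖ : ℂ)) ^ v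

/-- `g^μ` where `μ` is encoded as a triple `(b, c, v) : ℝ × ℝ × ℤ`. -/
noncomputable def cpwT (t : ℝ × ℝ × ℤ) (g : ℂ) : ℂ := cpw t.1 t.2.1 t.2.2 g

/-- The product `μ₂μ₁ = (b₁b₂, b₁c₂ + c₁v₂, v₁v₂)` in the ring `𝓡 ≅ ℂ × ℤ`. -/
def rmul (μ₂ μ₁ : ℝ × ℝ × ℤ) : ℝ × ℝ × ℤ :=
  (μ₁.1 * μ₂.1, μ₁.1 * μ₂.2.1 + μ₁.2.1 * (μ₂.2.2 : ℝ), μ₁.2.2 * μ₂.2.2)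

/-- The identity element of `𝓡`. -/
def rone : ℝ × ℝ × ℤ := (1, 0, 1)

/-- `⟨α, β⟩ = Σₖ αᵏ βᵏ ∈ 𝓡`. -/
def rinner {n : ℕ} (α β : Fin n → ℝ × ℝ × ℤ) : ℝ × ℝ × ℤ :=
  ∑ k, rmul (α k) (β k)

/-- `χ^α(g₁, …, gₙ) = ∏ₖ gₖ^{αᵏ}`. -/
noncomputable def chi {n : ℕ} (α : Fin n → ℝ × ℝ × ℤ) (g : Fin n → ℂ) : ℂ :=
  ∏ k, cpwT (α k) (g k)

open Manifold

/-- The ring `𝓡` of 2×2 real matrices of the form `[[b,0],[c,v]]` with `b, c ∈ ℝ`, `v ∈ ℤ`,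
as a subring of the ring of 2×2 real matrices. -/
def RMat : Subring (Matrix (Fin 2) (Fin 2) ℝ) where
  carrier := {M | M 0 1 = 0 ∧ ∃ v : ℤ, M 1 1 = (v : ℝ)}
  zero_mem' := ⟨rfl, 0, by simp⟩
  one_mem' := ⟨by simp [Matrix.one_apply], 1, by simp [Matrix.one_apply]⟩
  add_mem' := by
    rintro a b ⟨ha, va, hva⟩ ⟨hb, vb, hvb⟩
    exact ⟨by simp [Matrix.add_apply, ha, hb], va + vb,
      by simp [Matrix.add_apply, hva, hvb]⟩
  neg_mem' := by
    rintro a ⟨ha, va, hva⟩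
    exact ⟨by simp [Matrix.neg_apply, ha], -va, by simp [Matrix.neg_apply, hva]⟩
  mul_mem' := by
    rintro a b ⟨ha, va, hva⟩ ⟨hb, vb, hvb⟩
    refine ⟨?_, va * vb, ?_⟩
    · simp [Matrix.mul_apply, Fin.sum_univ_two, ha, hb]
    · simp [Matrix.mul_apply, Fin.sum_univ_two, ha, hb, hva, hvb]

/-- The type of smooth group endomorphisms of `ℂ* = ℂˣ`. -/
def SmoothEnd : Type :=
  {f : ℂˣ →* ℂˣ // ContMDiff 𝓘(ℝ, ℂ) 𝓘(ℝ, ℂ) (⊤ : ℕ∞) (fun g : ℂˣ => f g)}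

open Complex Manifold
open scoped Real

theorem eq_cexp_fderiv_of_map_add {E : Type*} [NormedAddCommGroup E] [NormedSpace ℝ E]
    {F : E → ℂ} (hF : Differentiable ℝ F) (h0 : F 0 = 1)
    (hadd : ∀ x y, F (x + y) = F x * F y) (x : E) :
    F x = exp (fderiv ℝ F 0 x) := by
  set L := fderiv ℝ F 0
  have hF' : ∀ y, HasFDerivAt F (F y • L) y := by
    intro y
    have hshift : HasFDerivAt (fun u => F (u - y)) L y := by
      rw [hasFDerivAt_comp_sub, sub_self]
      exact (hF 0).hasFDerivAt
    refine (hshift.const_mul (F y)).congr_of_eventuallyEq (Filter.Eventually.of_forall ?_)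
    intro u
    simp [← hadd]
  have hG : ∀ y, HasFDerivAt (fun u => exp (-L u) * F u) (0 : E →L[ℝ] ℂ) y := by
    intro y
    refine (((-L).hasFDerivAt.cexp).mul (hF' y)).congr_fderiv ?_
    ext u
    simp only [add_apply, FunLike.coe_smul, Pi.smul_apply, neg_apply, smul_eq_mul, zero_apply]
    ring
  have hconst := is_const_of_fderiv_eq_zero (fun y => (hG y).differentiableAt)
    (fun y => (hG y).fderiv) x 0
  simp only [map_zero, neg_zero, exp_zero, h0, one_mul] at hconst
  rw [← mul_one (exp (L x)), ← hconst, ← mul_assoc, ← exp_add, add_neg_cancel,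
    exp_zero, one_mul]

def expUnits (z : ℂ) : ℂˣ := Units.mk0 (exp z) (exp_ne_zero z)

@[simp] theorem val_expUnits (z : ℂ) : (expUnits z : ℂ) = exp z := rfl

theorem expUnits_add (z w : ℂ) : expUnits (z + w) = expUnits z * expUnits w :=
  Units.ext (exp_add z w)

theorem expUnits_log (x : ℂˣ) : expUnits (log x) = x :=
  Units.ext (exp_log x.ne_zero)

theorem contMDiff_expUnits : ContMDiff 𝓘(ℝ, ℂ) 𝓘(ℝ, ℂ) (⊤ : ℕ∞) expUnits := by
  apply ContMDiff.of_comp_isOpenEmbedding Units.isOpenEmbedding_val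
  rw [contMDiff_iff_contDiff]
  exact (contDiff_exp (𝕜 := ℂ)).restrict_scalars ℝ

-- `rho (w - v) v g = |g| ^ w (g / |g|) ^ v`, written with `z ^ v` to make smoothness and
-- multiplicativity evident.
def rho (w : ℂ) (v : ℤ) (z : ℂ) : ℂ := exp (w * Real.log ‖z‖) * z ^ v

theorem rho_mul (w : ℂ) (v : ℤ) {z z' : ℂ} (hz : z ≠ 0) (hz' : z' ≠ 0) :
    rho w v (z * z') = rho w v z * rho w v z' := by
  simp only [rho, norm_mul, Real.log_mul (norm_ne_zero_iff.2 hz) (norm_ne_zero_iff.2 hz'),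
    ofReal_add, mul_add, exp_add, mul_zpow]
  ring

theorem rho_exp (w : ℂ) (v : ℤ) (z : ℂ) : rho w v (exp z) = exp (w * z.re + v * z) := by
  rw [rho, norm_exp, Real.log_exp, exp_add, exp_int_mul]

theorem contDiffAt_rho (w : ℂ) (v : ℤ) {z : ℂ} (hz : z ≠ 0) :
    ContDiffAt ℝ (⊤ : ℕ∞) (rho w v) z := by
  have hlog : ContDiffAt ℝ (⊤ : ℕ∞) (fun z : ℂ => ((Real.log ‖z‖ : ℝ) : ℂ)) z :=
    ofRealCLM.contDiff.contDiffAt.comp z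
      ((Real.contDiffAt_log.2 (norm_ne_zero_iff.2 hz)).comp z (contDiffAt_norm ℝ hz))
  have hzpow : ContDiffAt ℂ (⊤ : ℕ∞) (fun z : ℂ => z ^ v) z :=
    ((differentiableOn_zpow v _ (Or.inl (by simp))).contDiffOn isOpen_compl_singleton).contDiffAt
      (isOpen_compl_singleton.mem_nhds hz)
  exact ((contDiff_exp (𝕜 := ℂ)).restrict_scalars ℝ).contDiffAt.comp z
    (contDiffAt_const.mul hlog) |>.mul (hzpow.restrict_scalars ℝ)

def rhoHom (w : ℂ) (v : ℤ) : ℂˣ →* ℂˣ where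
  toFun g := Units.mk0 (rho w v g) (mul_ne_zero (exp_ne_zero _) (zpow_ne_zero _ g.ne_zero))
  map_one' := Units.ext (by simp [rho])
  map_mul' g h := Units.ext (rho_mul w v g.ne_zero h.ne_zero)

theorem contMDiff_rhoHom (w : ℂ) (v : ℤ) :
    ContMDiff 𝓘(ℝ, ℂ) 𝓘(ℝ, ℂ) (⊤ : ℕ∞) (fun g : ℂˣ => rhoHom w v g) := by
  apply ContMDiff.of_comp_isOpenEmbedding Units.isOpenEmbedding_val
  intro g
  exact (contMDiffAt_iff_contDiffAt.2 (contDiffAt_rho w v g.ne_zero)).comp g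
    (Units.contMDiff_val g)

def toMatrixOneI : (ℂ →L[ℝ] ℂ) →+* Matrix (Fin 2) (Fin 2) ℝ :=
  (LinearMap.toMatrixAlgEquiv basisOneI).toRingHom.comp ContinuousLinearMap.toLinearMapRingHom

theorem toMatrixOneI_apply (L : ℂ →L[ℝ] ℂ) :
    toMatrixOneI L = !![(L 1).re, (L I).re; (L 1).im, (L I).im] := by
  ext i j
  fin_cases i <;> fin_cases j <;> simp [toMatrixOneI, LinearMap.toMatrixAlgEquiv_apply]

theorem toMatrixOneI_injective : Function.Injective toMatrixOneI :=
  (LinearMap.toMatrixAlgEquiv basisOneI).injective.comp fun _ _ h =>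
    ContinuousLinearMap.coe_injective h

theorem toMatrixOneI_surjective : Function.Surjective toMatrixOneI := fun M =>
  ⟨LinearMap.toContinuousLinearMap ((LinearMap.toMatrixAlgEquiv basisOneI).symm M),
    by simp [toMatrixOneI]⟩

theorem toMatrixOneI_mem_RMat_iff (L : ℂ →L[ℝ] ℂ) :
    toMatrixOneI L ∈ RMat ↔ ∃ n : ℤ, L I = n * I := by
  change toMatrixOneI L 0 1 = 0 ∧ _ ↔ _
  simp only [toMatrixOneI_apply, Matrix.of_apply, Matrix.cons_val', Matrix.cons_val_zero,
    Matrix.cons_val_one, Matrix.empty_val', Matrix.cons_val_fin_one]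
  constructor
  · rintro ⟨hre, n, him⟩
    exact ⟨n, Complex.ext (by simp [hre]) (by simp [him])⟩
  · rintro ⟨n, hn⟩
    exact ⟨by simp [hn], n, by simp [hn]⟩

namespace SmoothEnd

theorem differentiable_comp_expUnits (f : SmoothEnd) :
    Differentiable ℝ (fun z => (f.1 (expUnits z) : ℂ)) := by
  have := (Units.contMDiff_val (𝕜 := ℝ) (R := ℂ)).comp (f.2.comp contMDiff_expUnits)
  rw [contMDiff_iff_contDiff] at this
  exact this.differentiable (by simp)

def toLin (f : SmoothEnd) : ℂ →L[ℝ] ℂ :=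
  fderiv ℝ (fun z => (f.1 (expUnits z) : ℂ)) 0

theorem map_expUnits (f : SmoothEnd) (z : ℂ) : f.1 (expUnits z) = expUnits (f.toLin z) :=
  Units.ext <| eq_cexp_fderiv_of_map_add f.differentiable_comp_expUnits
    (by simp [show expUnits 0 = 1 from Units.ext exp_zero])
    (fun z w => by simp [expUnits_add]) z

theorem apply_eq_expUnits_toLin_log (f : SmoothEnd) (x : ℂˣ) :
    f.1 x = expUnits (f.toLin (log x)) := by
  rw [← map_expUnits, expUnits_log]

theorem toLin_injective : Function.Injective toLin := fun f g h =>
  Subtype.ext <| MonoidHom.ext fun x => by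
    rw [apply_eq_expUnits_toLin_log, apply_eq_expUnits_toLin_log, h]

theorem toLin_eq_of_map_expUnits {f : SmoothEnd} {L : ℂ →L[ℝ] ℂ}
    (h : ∀ z, f.1 (expUnits z) = expUnits (L z)) : f.toLin = L := by
  have hf : (fun z => (f.1 (expUnits z) : ℂ)) = fun z => exp (L z) :=
    funext fun z => by rw [h, val_expUnits]
  rw [toLin, hf]
  simpa using (L.hasFDerivAt (x := 0)).cexp.fderiv

theorem exists_toLin_I (f : SmoothEnd) : ∃ n : ℤ, f.toLin I = n * I := by
  have hperiod : exp (f.toLin (2 * π * I)) = 1 := by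
    rw [← val_expUnits, ← map_expUnits, show expUnits (2 * π * I) = 1 from
      Units.ext exp_two_pi_mul_I, map_one, Units.val_one]
  obtain ⟨n, hn⟩ := exp_eq_one_iff.1 hperiod
  have hlin : f.toLin (2 * π * I) = 2 * π * f.toLin I := by
    rw [show (2 * π * I : ℂ) = ((2 * π : ℝ) : ℂ) * I by push_cast; ring, ← real_smul,
      map_smul, real_smul]
    push_cast
    rfl
  have h2π : (2 * π : ℂ) ≠ 0 := by exact_mod_cast Real.two_pi_pos.ne'
  refine ⟨n, mul_left_cancel₀ h2π ?_⟩
  rw [← hlin, hn]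
  ring

theorem exists_toLin_eq {L : ℂ →L[ℝ] ℂ} {n : ℤ} (hL : L I = n * I) :
    ∃ f : SmoothEnd, f.toLin = L := by
  refine ⟨⟨rhoHom (L 1 - n) n, contMDiff_rhoHom _ _⟩, toLin_eq_of_map_expUnits fun z => ?_⟩
  have hLz : L z = z.re * L 1 + z.im * L I := by
    conv_lhs => rw [← re_add_im z, ← mul_one (z.re : ℂ), ← real_smul, ← real_smul]
    rw [map_add, map_smul, map_smul, real_smul, real_smul]
  refine Units.ext ?_
  change rho _ _ (exp z) = exp (L z)
  rw [rho_exp, hLz, hL]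
  congr 1
  linear_combination (-n : ℂ) * re_add_im z

def toRMat (f : SmoothEnd) : RMat :=
  ⟨toMatrixOneI f.toLin, (toMatrixOneI_mem_RMat_iff _).2 f.exists_toLin_I⟩

theorem toRMat_bijective : Function.Bijective toRMat := by
  refine ⟨fun f g h => toLin_injective (toMatrixOneI_injective (congrArg Subtype.val h)),
    fun M => ?_⟩
  obtain ⟨L, hL⟩ := toMatrixOneI_surjective M.1
  obtain ⟨n, hn⟩ := (toMatrixOneI_mem_RMat_iff L).1 (hL ▸ M.2)
  obtain ⟨f, hf⟩ := exists_toLin_eq hn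
  exact ⟨f, Subtype.ext ((congrArg toMatrixOneI hf).trans hL)⟩

end SmoothEnd

/-- the ring of smooth group endomorphisms of `ℂ*` (addition = pointwise
multiplication, multiplication = composition) is isomorphic to the ring `𝓡` of 2×2 real
matrices `[[b,0],[c,v]]` with `b, c ∈ ℝ`, `v ∈ ℤ`: there is a bijection to `𝓡` carrying
pointwise product to addition and composition to multiplication. -/
theorem smoothEnd_ring_iso :
    ∃ e : SmoothEnd ≃ RMat,
      (∀ f g : SmoothEnd, ∀ x : ℂˣ,
        (((e.symm (e f + e g)).1 x : ℂˣ) : ℂ) = ((f.1 x : ℂˣ) : ℂ) * ((g.1 x : ℂˣ) : ℂ)) ∧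
      (∀ f g : SmoothEnd, ∀ x : ℂˣ,
        (e.symm (e f * e g)).1 x = f.1 (g.1 x)) := by
  let e := Equiv.ofBijective SmoothEnd.toRMat SmoothEnd.toRMat_bijective
  have toLin_symm (M : RMat) : toMatrixOneI (e.symm M).toLin = M :=
    congrArg Subtype.val (e.apply_symm_apply M)
  refine ⟨e, fun f g x => ?_, fun f g x => ?_⟩
  · have h : (e.symm (e f + e g)).toLin = f.toLin + g.toLin :=
      toMatrixOneI_injective (by rw [toLin_symm, map_add]; rfl)
    simp only [SmoothEnd.apply_eq_expUnits_toLin_log, h, val_expUnits, add_apply, exp_add]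
  · have h : (e.symm (e f * e g)).toLin = f.toLin * g.toLin :=
      toMatrixOneI_injective (by rw [toLin_symm, map_mul]; rfl)
    rw [SmoothEnd.apply_eq_expUnits_toLin_log _ x, h, SmoothEnd.apply_eq_expUnits_toLin_log g x,
      SmoothEnd.map_expUnits]
    rfl
end
end

section
/- Let Δ = (Σ, β) be a complete non-singular topological fan with vertex set [m], and let λ : (ℂ*)ᵐ → (ℂ*)ⁿ be defined by λ(h₁,…,hₘ) = ∏ₖ λ_{βₖ}(hₖ). Then λ is surjective and Ker λ = {(h₁,…,hₘ) ∈ (ℂ*)ᵐ : ∏ₖ hₖ^{⟨α,βₖ⟩} = 1 for all α ∈ 𝓡ⁿ}. Moreover, for I ∈ Σ of maximal cardinality n with dual set {αᵢᴵ}ᵢ∈I of {βᵢ}ᵢ∈I, Ker λ = {(h₁,…,hₘ) : hᵢ·∏_{k∉I} hₖ^{⟨αᵢᴵ,βₖ⟩} = 1 for all i ∈ I}. -/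
noncomputable section

open Complex Finset

/-- The cone spanned by the vectors `b i`, `i ∈ I`. -/
def coneOf {n : ℕ} (m : ℕ) (b : Fin m → (Fin n → ℝ)) (I : Finset (Fin m)) :
    Set (Fin n → ℝ) :=
  {x | ∃ r : Fin m → ℝ, (∀ i, 0 ≤ r i) ∧ (∀ i ∉ I, r i = 0) ∧ x = ∑ i, r i • b i}

/-- A complete non-singular (simplicial) topological fan of dimension `n` on the vertex set
`[m]`: an abstract simplicial complex `cx` on `Fin m` together with
`β : Fin m → 𝓡ⁿ = ℂⁿ × ℤⁿ`, `β i = (bᵢ + i·cᵢ, vᵢ)` (encoded componentwise by triples in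
`ℝ × ℝ × ℤ`), such that the cones `∠b_I`, `I ∈ cx`, form a complete ordinary simplicial fan
and each `{vᵢ}_{i ∈ I}` is part of a `ℤ`-basis of `ℤⁿ` (rows of a unimodular matrix). -/
structure CompleteNonsingularTopFan (n m : ℕ) where
  cx : Finset (Finset (Fin m))
  β : Fin m → Fin n → ℝ × ℝ × ℤ
  down_closed : ∀ I ∈ cx, ∀ J ⊆ I, J ∈ cx
  vertices : ∀ i : Fin m, {i} ∈ cx
  indep : ∀ I ∈ cx, LinearIndependent ℝ (fun i : I => fun k => (β i k).1)
  cone_inter : ∀ I ∈ cx, ∀ J ∈ cx,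
    coneOf m (fun i k => (β i k).1) I ∩ coneOf m (fun i k => (β i k).1) J =
      coneOf m (fun i k => (β i k).1) (I ∩ J)
  complete : (⋃ I ∈ cx, coneOf m (fun i k => (β i k).1) I) = Set.univ
  nonsingular : ∀ I ∈ cx, ∃ (C : Matrix (Fin n) (Fin n) ℤ) (ρ : Fin m → Fin n),
    IsUnit C.det ∧ Set.InjOn ρ (I : Set (Fin m)) ∧ ∀ i ∈ I, ∀ k, C (ρ i) k = (β i k).2.2

/-- The homomorphism `λ : (ℂ*)ᵐ → (ℂ*)ⁿ`, `λ(h₁,…,hₘ) = ∏ₖ λ_{βₖ}(hₖ)`, written on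
`j`-th coordinates: `λ(h)ⱼ = ∏ₖ hₖ^{βₖʲ}`. -/
noncomputable def lamMap {n m : ℕ} (β : Fin m → Fin n → ℝ × ℝ × ℤ) (h : Fin m → ℂ) :
    Fin n → ℂ :=
  fun j => ∏ k, cpwT (β k j) (h k)

/-!
Work in logarithmic coordinates `g = e^(x + iθ)` on `ℂ*`: there `g ↦ g^μ`, `μ = (b + ic, v)`,
is the linear map `(x, θ) ↦ (b x, c x + v θ)` read modulo `θ ∈ 2πℤ`. Hence `λ` is onto as soon
as the real parts `bₖ` span `ℝⁿ` (completeness) and the integer parts `vₖ` span `ℝⁿ` (they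
contain a `ℤ`-basis, by non-singularity of a maximal cone).

Since `μ ↦ (g ↦ g^μ)` turns sums into products and the product of `𝓡` into composition,
`∏ₖ hₖ^{⟨α,βₖ⟩} = χ^α(λ h)`, and the characters `χ^α` separate the points of `(ℂ*)ⁿ`.
For a maximal cone `I`, the dual set turns `χ^{αᵢ}(t) = 1` (`i ∈ I`) into a linear system with
invertible real part and unimodular integer part, which forces `t = 1`.
-/

open Real Matrix

def expLog (x θ : ℝ) : ℂ := Complex.exp (x + θ * I)

lemma expLog_ne_zero (x θ : ℝ) : expLog x θ ≠ 0 := Complex.exp_ne_zero _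

lemma expLog_log_norm_arg {g : ℂ} (hg : g ≠ 0) : expLog (Real.log ‖g‖) (arg g) = g := by
  rw [expLog, Complex.exp_add, ← Complex.ofReal_exp, Real.exp_log (norm_pos_iff.mpr hg),
    norm_mul_exp_arg_mul_I]

lemma expLog_eq_one_iff {x θ : ℝ} : expLog x θ = 1 ↔ x = 0 ∧ ∃ N : ℤ, θ = N * (2 * π) := by
  rw [expLog, Complex.exp_eq_one_iff]
  constructor
  · rintro ⟨N, hN⟩
    have hre := congrArg Complex.re hN
    have him := congrArg Complex.im hN
    simp at hre him
    exact ⟨hre, N, by linarith⟩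
  · rintro ⟨rfl, N, rfl⟩
    exact ⟨N, by push_cast; ring⟩

lemma prod_expLog {ι : Type*} (s : Finset ι) (x θ : ι → ℝ) :
    ∏ k ∈ s, expLog (x k) (θ k) = expLog (∑ k ∈ s, x k) (∑ k ∈ s, θ k) := by
  simp only [expLog, ← Complex.exp_sum, Finset.sum_add_distrib, Finset.sum_mul, ofReal_sum]

lemma cpwT_expLog (μ : ℝ × ℝ × ℤ) (x θ : ℝ) :
    cpwT μ (expLog x θ) = expLog (μ.1 * x) (μ.2.1 * x + μ.2.2 * θ) := by
  have hnorm : (‖expLog x θ‖ : ℂ) = Complex.exp x := by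
    rw [expLog, Complex.norm_exp, ← Complex.ofReal_exp]
    simp
  have hcpow : Complex.exp x ^ ((μ.1 : ℂ) + μ.2.1 * I) = Complex.exp ((μ.1 + μ.2.1 * I) * x) := by
    rw [Complex.cpow_def_of_ne_zero (Complex.exp_ne_zero _), Complex.log_exp, mul_comm] <;>
      simp [Real.pi_pos, Real.pi_nonneg]
  have hphase : expLog x θ / Complex.exp x = Complex.exp (θ * I) := by
    rw [expLog, ← Complex.exp_sub, add_sub_cancel_left]
  rw [cpwT, cpw, hnorm, hcpow, hphase, ← Complex.exp_int_mul, ← Complex.exp_add, expLog]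
  push_cast
  ring_nf

lemma cpwT_ne_zero (μ : ℝ × ℝ × ℤ) {g : ℂ} (hg : g ≠ 0) : cpwT μ g ≠ 0 := by
  rw [← expLog_log_norm_arg hg, cpwT_expLog]
  exact expLog_ne_zero _ _

@[simp]
lemma cpwT_zero (g : ℂ) : cpwT 0 g = 1 := by
  simp [cpwT, cpw]

@[simp]
lemma cpwT_rone (g : ℂ) : cpwT rone g = g := by
  rcases eq_or_ne g 0 with rfl | hg
  · simp [cpwT, cpw, rone]
  · simp [cpwT, cpw, rone, mul_div_cancel₀ _ (ofReal_ne_zero.mpr (norm_ne_zero_iff.mpr hg))]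

@[simp]
lemma cpwT_one (μ : ℝ × ℝ × ℤ) : cpwT μ 1 = 1 := by
  simp [cpwT, cpw]

lemma cpwT_prod {ι : Type*} (μ : ℝ × ℝ × ℤ) (s : Finset ι) {f : ι → ℂ} (hf : ∀ k ∈ s, f k ≠ 0) :
    cpwT μ (∏ k ∈ s, f k) = ∏ k ∈ s, cpwT μ (f k) := by
  have hrepr : ∀ k ∈ s, expLog (Real.log ‖f k‖) (arg (f k)) = f k :=
    fun k hk => expLog_log_norm_arg (hf k hk)
  calc cpwT μ (∏ k ∈ s, f k)
      = cpwT μ (∏ k ∈ s, expLog (Real.log ‖f k‖) (arg (f k))) := by rw [Finset.prod_congr rfl hrepr]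
    _ = ∏ k ∈ s, cpwT μ (expLog (Real.log ‖f k‖) (arg (f k))) := by
      simp only [cpwT_expLog, prod_expLog, Finset.mul_sum, Finset.sum_add_distrib]
    _ = ∏ k ∈ s, cpwT μ (f k) := Finset.prod_congr rfl fun k hk => by rw [hrepr k hk]

lemma cpwT_sum {ι : Type*} (s : Finset ι) (μ : ι → ℝ × ℝ × ℤ) {g : ℂ} (hg : g ≠ 0) :
    cpwT (∑ j ∈ s, μ j) g = ∏ j ∈ s, cpwT (μ j) g := by
  rw [← expLog_log_norm_arg hg]
  simp only [cpwT_expLog, prod_expLog, Prod.fst_sum, Prod.snd_sum, Finset.sum_mul,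
    Finset.sum_add_distrib, Int.cast_sum]

lemma cpwT_rmul (μ ν : ℝ × ℝ × ℤ) {g : ℂ} (hg : g ≠ 0) :
    cpwT (rmul μ ν) g = cpwT μ (cpwT ν g) := by
  rw [← expLog_log_norm_arg hg]
  simp only [cpwT_expLog, rmul]
  congr 1 <;> push_cast <;> ring

section Characters

variable {n m : ℕ}

lemma lamMap_ne_zero (β : Fin m → Fin n → ℝ × ℝ × ℤ) {h : Fin m → ℂ} (hh : ∀ k, h k ≠ 0)
    (j : Fin n) : lamMap β h j ≠ 0 :=
  Finset.prod_ne_zero_iff.mpr fun k _ => cpwT_ne_zero _ (hh k)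

lemma prod_cpwT_rinner (β : Fin m → Fin n → ℝ × ℝ × ℤ) (α : Fin n → ℝ × ℝ × ℤ)
    {h : Fin m → ℂ} (hh : ∀ k, h k ≠ 0) :
    ∏ k, cpwT (rinner α (β k)) (h k) = chi α (lamMap β h) := by
  calc ∏ k, cpwT (rinner α (β k)) (h k)
      = ∏ k, ∏ j, cpwT (α j) (cpwT (β k j) (h k)) := by
        simp only [rinner, cpwT_sum _ _ (hh _), cpwT_rmul _ _ (hh _)]
    _ = ∏ j, ∏ k, cpwT (α j) (cpwT (β k j) (h k)) := Finset.prod_comm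
    _ = chi α (lamMap β h) := by
        simp only [chi, lamMap, cpwT_prod _ _ fun k _ => cpwT_ne_zero _ (hh k)]

lemma chi_expLog (α : Fin n → ℝ × ℝ × ℤ) (x θ : Fin n → ℝ) :
    chi α (fun l => expLog (x l) (θ l)) =
      expLog (∑ l, (α l).1 * x l) (∑ l, ((α l).2.1 * x l + (α l).2.2 * θ l)) := by
  simp only [chi, cpwT_expLog, prod_expLog]

@[simp]
lemma chi_one (α : Fin n → ℝ × ℝ × ℤ) : chi α (fun _ => 1) = 1 := by
  simp [chi]

lemma chi_ite_rone (t : Fin n → ℂ) (j : Fin n) :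
    chi (fun j' => if j' = j then rone else 0) t = t j := by
  rw [chi, Finset.prod_eq_single j (fun j' _ hj' => by rw [if_neg hj', cpwT_zero])
    (fun hj => absurd (Finset.mem_univ j) hj), if_pos rfl, cpwT_rone]

lemma lamMap_eq_one_iff_forall_prod_cpwT_rinner (β : Fin m → Fin n → ℝ × ℝ × ℤ)
    {h : Fin m → ℂ} (hh : ∀ k, h k ≠ 0) :
    (lamMap β h = fun _ => 1) ↔ ∀ α : Fin n → ℝ × ℝ × ℤ, ∏ k, cpwT (rinner α (β k)) (h k) = 1 := by
  simp only [prod_cpwT_rinner β _ hh]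
  refine ⟨fun hker α => by rw [hker, chi_one], fun hχ => funext fun j => ?_⟩
  rw [← chi_ite_rone (lamMap β h) j]
  exact hχ _

end Characters

lemma Matrix.eq_zero_of_mul_transpose_eq_one_of_mulVec_eq_zero {ι R : Type*} [Fintype ι]
    [DecidableEq ι] [CommRing R] [IsStablyFiniteRing R] {n : ℕ} (e : ι ≃ Fin n)
    {A B : Matrix ι (Fin n) R} (hAB : A * Bᵀ = 1) {x : Fin n → R} (hAx : A *ᵥ x = 0) : x = 0 := by
  rw [← one_mulVec x, ← (mul_eq_one_comm_of_equiv e).1 hAB, ← mulVec_mulVec, hAx, mulVec_zero]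

lemma Matrix.eq_intCast_mulVec_mul_of_mul_transpose_eq_one {ι : Type*} [Fintype ι]
    [DecidableEq ι] {n : ℕ} (e : ι ≃ Fin n) {U W : Matrix ι (Fin n) ℤ} (hUW : U * Wᵀ = 1)
    {Q : Fin n → ℝ} {c : ℝ} {N : ι → ℤ} (hN : U.map (↑) *ᵥ Q = fun i => N i * c) :
    Q = fun j => ((Wᵀ *ᵥ N) j : ℝ) * c := by
  have hWU : Wᵀ * U = 1 := (mul_eq_one_comm_of_equiv e).1 hUW
  calc Q = (Wᵀ * U).map (Int.castRingHom ℝ) *ᵥ Q := by simp [hWU]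
    _ = Wᵀ.map (↑) *ᵥ (U.map (↑) *ᵥ Q) := by rw [Matrix.map_mul, mulVec_mulVec]; rfl
    _ = fun j => ((Wᵀ *ᵥ N) j : ℝ) * c := by
      rw [hN]
      ext j
      simp [mulVec, dotProduct, Finset.sum_mul, mul_assoc]

lemma coneOf_subset_span {n m : ℕ} (b : Fin m → Fin n → ℝ) (I : Finset (Fin m)) :
    coneOf m b I ⊆ Submodule.span ℝ (b '' I) := by
  rintro _ ⟨r, -, hrI, rfl⟩
  refine Submodule.sum_mem _ fun i _ => ?_
  by_cases hi : i ∈ I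
  · exact Submodule.smul_mem _ _ (Submodule.subset_span ⟨i, hi, rfl⟩)
  · simp [hrI i hi]

lemma span_range_eq_top_of_linearIndependent_restrict {ι : Type*} {n : ℕ} {v : ι → Fin n → ℝ}
    {I : Finset ι} (hli : LinearIndependent ℝ fun i : I => v i) (hcard : I.card = n) :
    Submodule.span ℝ (Set.range v) = ⊤ :=
  eq_top_mono (Submodule.span_mono (Set.range_comp_subset_range (Subtype.val : I → ι) v))
    (hli.span_eq_top_of_card_eq_finrank' (by simp [hcard]))

lemma linearIndependent_intCast_rows_of_isUnit_det {n : ℕ} {C : Matrix (Fin n) (Fin n) ℤ}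
    (hC : IsUnit C.det) : LinearIndependent ℝ fun p j => (C p j : ℝ) := by
  refine linearIndependent_rows_of_isUnit (A := C.map (Int.cast : ℤ → ℝ)) ?_
  rw [isUnit_iff_isUnit_det]
  exact (RingHom.map_det (Int.castRingHom ℝ) C ▸ hC.map _ :)

lemma rinner_fst {n : ℕ} (α β : Fin n → ℝ × ℝ × ℤ) :
    (rinner α β).1 = ∑ j, (α j).1 * (β j).1 := by
  simp only [rinner, rmul, Prod.fst_sum, mul_comm]

lemma rinner_snd_snd {n : ℕ} (α β : Fin n → ℝ × ℝ × ℤ) :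
    (rinner α β).2.2 = ∑ j, (α j).2.2 * (β j).2.2 := by
  simp only [rinner, rmul, Prod.snd_sum, mul_comm]

section Dual

variable {n m : ℕ} {β αI : Fin m → Fin n → ℝ × ℝ × ℤ} {I : Finset (Fin m)}

lemma mul_prod_compl_cpwT_rinner_of_dual
    (hdual : ∀ i ∈ I, ∀ i' ∈ I, rinner (αI i) (β i') = if i = i' then rone else 0)
    {i : Fin m} (hi : i ∈ I) (h : Fin m → ℂ) :
    h i * ∏ k ∈ Iᶜ, cpwT (rinner (αI i) (β k)) (h k) = ∏ k, cpwT (rinner (αI i) (β k)) (h k) := by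
  rw [← Finset.prod_mul_prod_compl I, Finset.prod_eq_single_of_mem i hi fun k hk hki => by
    rw [hdual i hi k hk, if_neg (Ne.symm hki), cpwT_zero], hdual i hi i hi, if_pos rfl, cpwT_rone]

lemma eq_one_of_forall_chi_dual_eq_one (hcard : I.card = n)
    (hdual : ∀ i ∈ I, ∀ i' ∈ I, rinner (αI i) (β i') = if i = i' then rone else 0)
    {t : Fin n → ℂ} (ht : ∀ j, t j ≠ 0) (hχ : ∀ i ∈ I, chi (αI i) t = 1) :
    t = fun _ => 1 := by
  classical
  let e : I ≃ Fin n := Fintype.equivFinOfCardEq (by rw [Fintype.card_coe, hcard])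
  set P : Fin n → ℝ := fun l => Real.log ‖t l‖
  set Q : Fin n → ℝ := fun l => arg (t l)
  have ht_eq : t = fun l => expLog (P l) (Q l) :=
    funext fun l => (expLog_log_norm_arg (ht l)).symm
  have hcoord : ∀ i : I, (∑ l, (αI i l).1 * P l = 0) ∧
      ∃ N : ℤ, ∑ l, ((αI i l).2.1 * P l + (αI i l).2.2 * Q l) = N * (2 * π) := by
    intro i
    rw [← expLog_eq_one_iff, ← chi_expLog, ← ht_eq, hχ i i.2]
  have hdual_ext : ∀ i i' : I, rinner (αI i) (β i') = if i = i' then rone else 0 := by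
    intro i i'
    rw [hdual i i.2 i' i'.2]
    exact if_congr Subtype.ext_iff.symm rfl rfl
  have hP : P = 0 := by
    let A : Matrix I (Fin n) ℝ := of fun i l => (αI i l).1
    let B : Matrix I (Fin n) ℝ := of fun i l => (β i l).1
    have hAB : A * Bᵀ = 1 := by
      ext i i'
      simp only [A, B, mul_apply, transpose_apply, of_apply, one_apply, ← rinner_fst, hdual_ext]
      split_ifs <;> rfl
    exact eq_zero_of_mul_transpose_eq_one_of_mulVec_eq_zero e hAB (funext fun i => (hcoord i).1)
  let U : Matrix I (Fin n) ℤ := of fun i l => (αI i l).2.2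
  let W : Matrix I (Fin n) ℤ := of fun i l => (β i l).2.2
  have hUW : U * Wᵀ = 1 := by
    ext i i'
    simp only [U, W, mul_apply, transpose_apply, of_apply, one_apply, ← rinner_snd_snd, hdual_ext]
    split_ifs <;> rfl
  choose N hN using fun i => (hcoord i).2
  have hQ := eq_intCast_mulVec_mul_of_mul_transpose_eq_one e hUW (c := 2 * π)
    (funext fun i => by simpa [hP, mulVec, dotProduct, U] using hN i)
  rw [ht_eq]
  funext j
  exact expLog_eq_one_iff.2 ⟨congrFun hP j, _, congrFun hQ j⟩

lemma lamMap_eq_one_iff_of_dual (hcard : I.card = n)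
    (hdual : ∀ i ∈ I, ∀ i' ∈ I, rinner (αI i) (β i') = if i = i' then rone else 0)
    {h : Fin m → ℂ} (hh : ∀ k, h k ≠ 0) :
    (lamMap β h = fun _ => 1) ↔
      ∀ i ∈ I, h i * ∏ k ∈ Iᶜ, cpwT (rinner (αI i) (β k)) (h k) = 1 := by
  refine ⟨fun hker i hi => ?_, fun H => ?_⟩
  · rw [mul_prod_compl_cpwT_rinner_of_dual hdual hi, prod_cpwT_rinner β _ hh, hker, chi_one]
  · refine eq_one_of_forall_chi_dual_eq_one hcard hdual (lamMap_ne_zero β hh) fun i hi => ?_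
    rw [← prod_cpwT_rinner β _ hh, ← mul_prod_compl_cpwT_rinner_of_dual hdual hi]
    exact H i hi

end Dual

lemma lamMap_surjective_of_span_eq_top {n m : ℕ} (β : Fin m → Fin n → ℝ × ℝ × ℤ)
    (hb : Submodule.span ℝ (Set.range fun k j => (β k j).1) = ⊤)
    (hv : Submodule.span ℝ (Set.range fun k j => ((β k j).2.2 : ℝ)) = ⊤)
    {t : Fin n → ℂ} (ht : ∀ j, t j ≠ 0) :
    ∃ h : Fin m → ℂ, (∀ k, h k ≠ 0) ∧ lamMap β h = t := by
  obtain ⟨x, hx⟩ := (Submodule.mem_span_range_iff_exists_fun ℝ).1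
    (hb ▸ Submodule.mem_top (x := fun j => Real.log ‖t j‖))
  obtain ⟨θ, hθ⟩ := (Submodule.mem_span_range_iff_exists_fun ℝ).1
    (hv ▸ Submodule.mem_top (x := fun j => arg (t j) - ∑ k, (β k j).2.1 * x k))
  refine ⟨fun k => expLog (x k) (θ k), fun k => expLog_ne_zero _ _, funext fun j => ?_⟩
  have hxj := congrFun hx j
  have hθj := congrFun hθ j
  simp only [Finset.sum_apply, Pi.smul_apply, smul_eq_mul] at hxj hθj
  rw [lamMap]
  simp only [cpwT_expLog, prod_expLog, Finset.sum_add_distrib]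
  rw [← expLog_log_norm_arg (ht j)]
  congr 1
  · rw [← hxj]
    exact Finset.sum_congr rfl fun k _ => mul_comm _ _
  · have hcomm : ∑ k, ((β k j).2.2 : ℝ) * θ k = ∑ k, θ k * (β k j).2.2 :=
      Finset.sum_congr rfl fun k _ => mul_comm _ _
    linarith

namespace CompleteNonsingularTopFan

variable {n m : ℕ} (Δ : CompleteNonsingularTopFan n m)

lemma card_le_of_mem {I : Finset (Fin m)} (hI : I ∈ Δ.cx) : I.card ≤ n := by
  simpa using (Δ.indep I hI).fintype_card_le_finrank

/-- Completeness makes finitely many cone spans cover `ℝⁿ`, so one of them is all of `ℝⁿ`. -/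
lemma exists_mem_card_eq : ∃ I ∈ Δ.cx, I.card = n := by
  set b : Fin m → Fin n → ℝ := fun i k => (Δ.β i k).1
  have hcover : ⋃ I : Δ.cx, (Submodule.span ℝ (b '' I) : Set (Fin n → ℝ)) = Set.univ :=
    Set.eq_univ_of_univ_subset <| Δ.complete ▸ Set.iUnion₂_subset fun I hI =>
      Set.subset_iUnion_of_subset ⟨I, hI⟩ (coneOf_subset_span b I)
  obtain ⟨⟨I, hI⟩, htop⟩ := Subspace.exists_eq_top_of_iUnion_eq_univ hcover
  refine ⟨I, hI, le_antisymm (Δ.card_le_of_mem hI) ?_⟩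
  calc n = Module.finrank ℝ (Submodule.span ℝ (b '' I)) := by
        rw [htop, finrank_top, Module.finrank_fin_fun]
    _ ≤ (I.image b).card := by
        rw [← Finset.coe_image]
        exact finrank_span_finset_le_card _
    _ ≤ I.card := Finset.card_image_le

lemma linearIndependent_intCast_snd_snd {I : Finset (Fin m)} (hI : I ∈ Δ.cx) :
    LinearIndependent ℝ fun i : I => fun k => ((Δ.β i k).2.2 : ℝ) := by
  obtain ⟨C, ρ, hC, hρ, hCρ⟩ := Δ.nonsingular I hI
  convert (linearIndependent_intCast_rows_of_isUnit_det hC).comp (fun i : I => ρ i)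
    fun i i' h => Subtype.ext (hρ i.2 i'.2 h) using 1
  ext i k
  simp [hCρ i i.2 k]

lemma span_fst_eq_top : Submodule.span ℝ (Set.range fun i k => (Δ.β i k).1) = ⊤ := by
  obtain ⟨I, hI, hcard⟩ := Δ.exists_mem_card_eq
  exact span_range_eq_top_of_linearIndependent_restrict (Δ.indep I hI) hcard

lemma span_intCast_snd_snd_eq_top :
    Submodule.span ℝ (Set.range fun i k => ((Δ.β i k).2.2 : ℝ)) = ⊤ := by
  obtain ⟨I, hI, hcard⟩ := Δ.exists_mem_card_eq
  exact span_range_eq_top_of_linearIndependent_restrict (Δ.linearIndependent_intCast_snd_snd hI)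
    hcard

end CompleteNonsingularTopFan

/-- for a complete non-singular topological fan `Δ = (Σ, β)`, the map
`λ : (ℂ*)ᵐ → (ℂ*)ⁿ` is surjective; its kernel is
`{h : ∏ₖ hₖ^{⟨α,βₖ⟩} = 1 for all α ∈ 𝓡ⁿ}`; and for `I ∈ Σ` with `|I| = n` and a dual set
`{αᵢᴵ}ᵢ∈I` of `{βᵢ}ᵢ∈I`, the kernel is
`{h : hᵢ·∏_{k∉I} hₖ^{⟨αᵢᴵ,βₖ⟩} = 1 for all i ∈ I}`. -/
theorem lam_surjective_and_kernel (n m : ℕ) (Δ : CompleteNonsingularTopFan n m) :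
    (∀ t : Fin n → ℂ, (∀ j, t j ≠ 0) →
      ∃ h : Fin m → ℂ, (∀ k, h k ≠ 0) ∧ lamMap Δ.β h = t) ∧
    (∀ h : Fin m → ℂ, (∀ k, h k ≠ 0) →
      ((lamMap Δ.β h = fun _ => 1) ↔
        ∀ α : Fin n → ℝ × ℝ × ℤ, ∏ k, cpwT (rinner α (Δ.β k)) (h k) = 1)) ∧
    (∀ I ∈ Δ.cx, I.card = n →
      ∀ αI : Fin m → Fin n → ℝ × ℝ × ℤ,
        (∀ i ∈ I, ∀ i' ∈ I, rinner (αI i) (Δ.β i') = if i = i' then rone else 0) →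
        ∀ h : Fin m → ℂ, (∀ k, h k ≠ 0) →
          ((lamMap Δ.β h = fun _ => 1) ↔
            ∀ i ∈ I, h i * ∏ k ∈ Iᶜ, cpwT (rinner (αI i) (Δ.β k)) (h k) = 1)) :=
  ⟨fun _ ht => lamMap_surjective_of_span_eq_top Δ.β Δ.span_fst_eq_top
      Δ.span_intCast_snd_snd_eq_top ht,
    fun _ hh => lamMap_eq_one_iff_forall_prod_cpwT_rinner Δ.β hh,
    fun _ _ hcard _ hdual _ hh => lamMap_eq_one_iff_of_dual hcard hdual hh⟩
end
end
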